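/- Smoothness of the dual objective (Theorem 3.4): in the finite soft MOMDP setup, suppose |r_m(s,a)| ≤ R_m for all (s,a) and 1 ≤ m ≤ n, let μ0 : S → ℝ be an initial distribution (μ0 ≥ 0, Σ μ0 = 1), let b ∈ ℝ^n, and define L(θ) = Σ_s μ0(s)·V(θ)(s) − ⟨b, θ⟩, where V(θ) is the unique fixed point of T_θ. Then L is differentiable and its gradient is α-Lipschitz with respect to the Euclidean norm, i.e., ‖∇L(θ) − ∇L(θ')‖₂ ≤ α‖θ − θ'‖₂ for all θ, θ' ∈ ℝ^n, where α = (1/(β(1−γ))) Σ_{m=1}^n (R_m/(1−γ))². -/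

import Mathlib

/-!
Run soft value iteration `v₀ = 0`, `v_{k+1} = T_θ v_k`. It converges to `V θ` like `γ^k`, and
each iterate is smooth, with derivative
`D_{k+1} θ s = Σ_a π_k(a|s) (r(s,a) + γ Σ_{s'} T(s'|s,a) D_k θ s')`
for the softmax policy `π_k` of the iterate. By induction `‖D_k‖ ≤ ρ := ‖R‖/(1-γ)`, and `D_k` is
`α`-Lipschitz in `θ` with `α = ρ²/(β(1-γ))`, the fixed point of `α ↦ γα + ρ²/β`: the `Q`-values move
by at most `ρ‖θ-θ'‖`, which moves a softmax average of vectors of norm `≤ ρ` by at most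
`ρ²‖θ-θ'‖/β`, while the rest is contracted by `γ`. The same recursion gives
`‖D_{k+1} - D_k‖ = O(k γ^k)`, so `D_k` converges, and the Taylor bound
`|v_k θ' - v_k θ - D_k θ (θ' - θ)| ≤ α‖θ' - θ‖²`, uniform in `k`, passes to the limit.
Averaging against `μ0` keeps the constant `α`.
-/

open Finset Real Filter Topology

section Softmax

variable {ι : Type*} [Fintype ι]

noncomputable def softmax (x : ι → ℝ) (i : ι) : ℝ := exp (x i) / ∑ j, exp (x j)

lemma softmax_nonneg (x : ι → ℝ) (i : ι) : 0 ≤ softmax x i :=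
  div_nonneg (exp_pos _).le (sum_nonneg fun _ _ => (exp_pos _).le)

lemma sum_softmax [Nonempty ι] (x : ι → ℝ) : ∑ i, softmax x i = 1 := by
  simp only [softmax, ← sum_div]
  exact div_self (sum_pos (fun _ _ => exp_pos _) univ_nonempty).ne'

lemma norm_sum_smul_le_of_sum_eq_one {F : Type*} [SeminormedAddCommGroup F] [NormedSpace ℝ F]
    {w : ι → ℝ} {f : ι → F} {c : ℝ} (hw0 : ∀ i, 0 ≤ w i) (hw1 : ∑ i, w i = 1)
    (hf : ∀ i, ‖f i‖ ≤ c) : ‖∑ i, w i • f i‖ ≤ c := by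
  simpa using (convex_closedBall (0 : F) c).sum_mem (fun i _ => hw0 i) hw1
    fun i _ => mem_closedBall_zero_iff.2 (hf i)

lemma abs_sum_mul_le_of_sum_eq_one {w f : ι → ℝ} {c : ℝ} (hw0 : ∀ i, 0 ≤ w i)
    (hw1 : ∑ i, w i = 1) (hf : ∀ i, |f i| ≤ c) : |∑ i, w i * f i| ≤ c :=
  norm_sum_smul_le_of_sum_eq_one (F := ℝ) hw0 hw1 hf

lemma sum_mul_abs_sub_sum_mul_le [Nonempty ι] {w h : ι → ℝ} {c : ℝ} (hw0 : ∀ i, 0 ≤ w i)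
    (hw1 : ∑ i, w i = 1) (hh : ∀ i, |h i| ≤ c) :
    ∑ i, w i * |h i - ∑ j, w j * h j| ≤ c := by
  set e := ∑ j, w j * h j
  have hc : 0 ≤ c := (abs_nonneg _).trans (hh (Classical.arbitrary ι))
  have hvar : ∑ i, w i * (h i - e) ^ 2 = ∑ i, w i * h i ^ 2 - e ^ 2 := by
    have : ∀ i, w i * (h i - e) ^ 2 = w i * h i ^ 2 - 2 * e * (w i * h i) + e ^ 2 * w i :=
      fun i => by ring
    simp only [this, sum_add_distrib, sum_sub_distrib, ← mul_sum, hw1]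
    ring
  have hsq : ∑ i, w i * h i ^ 2 ≤ c ^ 2 := by
    calc ∑ i, w i * h i ^ 2 ≤ ∑ i, w i * c ^ 2 := by
          refine sum_le_sum fun i _ => mul_le_mul_of_nonneg_left ?_ (hw0 i)
          exact sq_le_sq' (abs_le.1 (hh i)).1 (abs_le.1 (hh i)).2
      _ = c ^ 2 := by rw [← sum_mul, hw1, one_mul]
  have hcs : (∑ i, w i * |h i - e|) ^ 2 ≤ (∑ i, w i) * ∑ i, w i * (h i - e) ^ 2 :=
    sum_sq_le_sum_mul_sum_of_sq_le_mul _ (fun i _ => hw0 i)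
      (fun i _ => mul_nonneg (hw0 i) (sq_nonneg _))
      fun i _ => le_of_eq (by rw [mul_pow, sq_abs]; ring)
  have hnn : 0 ≤ ∑ i, w i * |h i - e| := sum_nonneg fun i _ => mul_nonneg (hw0 i) (abs_nonneg _)
  nlinarith [sq_nonneg e]

lemma hasDerivAt_softmax_add_smul (x h : ι → ℝ) (t : ℝ) (i : ι) :
    HasDerivAt (fun t => softmax (x + t • h) i)
      (softmax (x + t • h) i * (h i - ∑ j, softmax (x + t • h) j * h j)) t := by
  have hexp : ∀ j, HasDerivAt (fun t => exp ((x + t • h) j)) (exp ((x + t • h) j) * h j) t :=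
    fun j => by simpa using (((hasDerivAt_id t).mul_const (h j)).const_add (x j)).exp
  have hS : 0 < ∑ j, exp ((x + t • h) j) := sum_pos (fun _ _ => exp_pos _) ⟨i, mem_univ i⟩
  refine ((hexp i).div (HasDerivAt.fun_sum fun j _ => hexp j) hS.ne').congr_deriv ?_
  simp only [softmax, div_mul_eq_mul_div, ← sum_div]
  field_simp

/-- The derivative along the segment from `y` to `x` is a covariance under the softmax weights;
bounding it through the variance, not termwise, gives the constant `ρ` rather than `2ρ`. -/
lemma norm_sum_softmax_smul_sub_le [Nonempty ι] {F : Type*} [NormedAddCommGroup F]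
    [NormedSpace ℝ F] {w : ι → F} {ρ c : ℝ} (hw : ∀ i, ‖w i‖ ≤ ρ) {x y : ι → ℝ}
    (hxy : ∀ i, |x i - y i| ≤ c) :
    ‖∑ i, softmax x i • w i - ∑ i, softmax y i • w i‖ ≤ ρ * c := by
  set h := x - y
  set z : ℝ → ι → ℝ := fun t => y + t • h
  have hderiv : ∀ t, HasDerivAt (fun t => ∑ i, softmax (z t) i • w i)
      (∑ i, (softmax (z t) i * (h i - ∑ j, softmax (z t) j * h j)) • w i) t :=
    fun t => HasDerivAt.fun_sum fun i _ => (hasDerivAt_softmax_add_smul y h t i).smul_const (w i)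
  have hbound : ∀ t, ‖∑ i, (softmax (z t) i * (h i - ∑ j, softmax (z t) j * h j)) • w i‖
      ≤ ρ * c := by
    intro t
    have hρ : 0 ≤ ρ := (norm_nonneg _).trans (hw (Classical.arbitrary ι))
    calc _ ≤ ∑ i, softmax (z t) i * |h i - ∑ j, softmax (z t) j * h j| * ρ := by
          refine (norm_sum_le _ _).trans (sum_le_sum fun i _ => ?_)
          rw [norm_smul, norm_mul, norm_of_nonneg (softmax_nonneg _ _), norm_eq_abs]
          exact mul_le_mul_of_nonneg_left (hw i) (by positivity [softmax_nonneg (z t) i])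
      _ ≤ c * ρ := by
          rw [← sum_mul]
          exact mul_le_mul_of_nonneg_right (sum_mul_abs_sub_sum_mul_le (softmax_nonneg _)
            (sum_softmax _) hxy) hρ
      _ = ρ * c := mul_comm _ _
  simpa [z, h] using norm_image_sub_le_of_norm_deriv_le_segment_01'
    (fun t _ => (hderiv t).hasDerivWithinAt) fun t _ => hbound t

lemma norm_sum_softmax_smul_sub_sum_softmax_smul_le [Nonempty ι] {F : Type*}
    [NormedAddCommGroup F] [NormedSpace ℝ F] {w w' : ι → F} {ε ρ c : ℝ}
    (hww' : ∀ i, ‖w i - w' i‖ ≤ ε) (hw' : ∀ i, ‖w' i‖ ≤ ρ) {x y : ι → ℝ}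
    (hxy : ∀ i, |x i - y i| ≤ c) :
    ‖∑ i, softmax x i • w i - ∑ i, softmax y i • w' i‖ ≤ ε + ρ * c := by
  have hsplit : ∑ i, softmax x i • w i - ∑ i, softmax y i • w' i
      = ∑ i, softmax x i • (w i - w' i)
        + (∑ i, softmax x i • w' i - ∑ i, softmax y i • w' i) := by
    simp only [smul_sub, sum_sub_distrib]
    abel
  rw [hsplit]
  exact (norm_add_le _ _).trans (add_le_add
    (norm_sum_smul_le_of_sum_eq_one (softmax_nonneg x) (sum_softmax x) hww')
    (norm_sum_softmax_smul_sub_le hw' hxy))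

lemma log_sum_exp_le_add [Nonempty ι] {x y : ι → ℝ} {c : ℝ} (h : ∀ i, x i ≤ y i + c) :
    log (∑ i, exp (x i)) ≤ log (∑ i, exp (y i)) + c := by
  have hpos : ∀ z : ι → ℝ, 0 < ∑ i, exp (z i) := fun _ =>
    sum_pos (fun _ _ => exp_pos _) univ_nonempty
  rw [← log_exp c, ← log_mul (hpos y).ne' (exp_pos c).ne', sum_mul]
  refine log_le_log (hpos x) (sum_le_sum fun i _ => ?_)
  rw [← exp_add]
  exact exp_le_exp.2 (h i)

lemma abs_log_sum_exp_sub_le [Nonempty ι] {x y : ι → ℝ} {c : ℝ} (h : ∀ i, |x i - y i| ≤ c) :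
    |log (∑ i, exp (x i)) - log (∑ i, exp (y i))| ≤ c := by
  rw [abs_sub_le_iff]
  constructor
  · linarith [log_sum_exp_le_add (x := x) (y := y) (c := c) fun i => by linarith [abs_le.1 (h i)]]
  · linarith [log_sum_exp_le_add (x := y) (y := x) (c := c) fun i => by linarith [abs_le.1 (h i)]]

lemma hasFDerivAt_mul_log_sum_exp_div [Nonempty ι] {E : Type*} [NormedAddCommGroup E]
    [NormedSpace ℝ E] {f : E → ι → ℝ} {f' : ι → E →L[ℝ] ℝ} {θ : E} {β : ℝ} (hβ : β ≠ 0)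
    (hf : ∀ i, HasFDerivAt (fun θ => f θ i) (f' i) θ) :
    HasFDerivAt (fun θ => β * log (∑ i, exp (f θ i / β)))
      (∑ i, softmax (fun i => f θ i / β) i • f' i) θ := by
  have hS : 0 < ∑ i, exp (f θ i / β) := sum_pos (fun _ _ => exp_pos _) univ_nonempty
  have hsum : HasFDerivAt (fun θ => ∑ i, exp (f θ i / β))
      (∑ i, exp (f θ i / β) • (β⁻¹ • f' i)) θ :=
    HasFDerivAt.fun_sum fun i _ => by
      simpa only [div_eq_mul_inv, mul_comm _ β⁻¹] using ((hf i).const_mul β⁻¹).exp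
  refine ((hsum.log hS.ne').const_mul β).congr_fderiv ?_
  simp only [softmax, smul_sum, smul_smul]
  refine sum_congr rfl fun i _ => ?_
  congr 1
  field_simp

end Softmax

section LipschitzDerivative

variable {E F : Type*} [NormedAddCommGroup E] [NormedSpace ℝ E] [NormedAddCommGroup F]
  [NormedSpace ℝ F]

lemma norm_image_sub_sub_fderiv_le {f : E → F} {f' : E → E →L[ℝ] F} {α : ℝ}
    (hf : ∀ x, HasFDerivAt f (f' x) x) (hf' : ∀ x y, ‖f' x - f' y‖ ≤ α * ‖x - y‖) (x y : E) :
    ‖f y - f x - f' x (y - x)‖ ≤ α * ‖y - x‖ ^ 2 := by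
  rcases eq_or_ne y x with rfl | hyx
  · simp
  have hα : 0 ≤ α := nonneg_of_mul_nonneg_left ((norm_nonneg _).trans (hf' y x))
    (norm_pos_iff.2 (sub_ne_zero.2 hyx))
  have := (convex_segment x y).norm_image_sub_le_of_norm_hasFDerivWithin_le'
    (fun z _ => (hf z).hasFDerivWithinAt) (fun z hz => (hf' z x).trans
      (mul_le_mul_of_nonneg_left (norm_sub_le_of_mem_segment hz) hα))
    (left_mem_segment ℝ x y) (right_mem_segment ℝ x y)
  rwa [mul_assoc, ← sq] at this

lemma hasFDerivAt_of_tendsto_of_lipschitz_fderiv {f : E → F} {fs : ℕ → E → F}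
    {D : E → E →L[ℝ] F} {Ds : ℕ → E → E →L[ℝ] F} {α : ℝ}
    (hfs : ∀ k x, HasFDerivAt (fs k) (Ds k x) x) (hDs : ∀ k x y, ‖Ds k x - Ds k y‖ ≤ α * ‖x - y‖)
    (hf : ∀ x, Tendsto (fun k => fs k x) atTop (𝓝 (f x)))
    (hD : ∀ x, Tendsto (fun k => Ds k x) atTop (𝓝 (D x))) (x : E) :
    HasFDerivAt f (D x) x := by
  have hquad : ∀ y, ‖f y - f x - D x (y - x)‖ ≤ α * ‖y - x‖ ^ 2 := fun y =>
    le_of_tendsto ((((hf y).sub (hf x)).sub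
        (((ContinuousLinearMap.apply ℝ F (y - x)).continuous.tendsto _).comp (hD x))).norm)
      (Eventually.of_forall fun k => norm_image_sub_sub_fderiv_le (hfs k) (hDs k) x y)
  rw [hasFDerivAt_iff_isLittleO_nhds_zero]
  refine (Asymptotics.IsBigO.of_bound α (Eventually.of_forall fun h => ?_)).trans_isLittleO
    (Asymptotics.isLittleO_norm_pow_id one_lt_two)
  simpa using hquad (x + h)

end LipschitzDerivative

lemma EuclideanSpace.norm_toLp_le_of_abs_le {ι : Type*} [Fintype ι] {x R : ι → ℝ}
    (h : ∀ i, |x i| ≤ R i) :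
    ‖(WithLp.toLp 2 x : EuclideanSpace ℝ ι)‖ ≤ ‖(WithLp.toLp 2 R : EuclideanSpace ℝ ι)‖ := by
  rw [EuclideanSpace.norm_eq, EuclideanSpace.norm_eq]
  exact sqrt_le_sqrt (sum_le_sum fun i _ => sq_le_sq.2 (by simpa using (h i).trans (le_abs_self _)))

section SoftValueIteration

variable {S A E : Type*} [Fintype S] [NormedAddCommGroup E] [NormedSpace ℝ E]
  {T : S → A → S → ℝ} {γ β : ℝ} {ℓ : S → A → E →L[ℝ] ℝ}

section
variable (T γ ℓ)

noncomputable def softQ (θ : E) (v : S → ℝ) (s : S) (a : A) : ℝ :=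
  ℓ s a θ + γ * ∑ s', T s a s' * v s'

noncomputable def softQDeriv (D : S → E →L[ℝ] ℝ) (s : S) (a : A) : E →L[ℝ] ℝ :=
  ℓ s a + γ • ∑ s', T s a s' • D s'

end

lemma HasFDerivAt.softQ {v : E → S → ℝ} {D : S → E →L[ℝ] ℝ} {θ : E}
    (hv : ∀ s', HasFDerivAt (fun θ => v θ s') (D s') θ) (s : S) (a : A) :
    HasFDerivAt (fun θ => softQ T γ ℓ θ (v θ) s a) (softQDeriv T γ ℓ D s a) θ :=
  (ℓ s a).hasFDerivAt.add
    ((HasFDerivAt.fun_sum fun s' _ => (hv s').const_mul (T s a s')).const_mul γ)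

lemma abs_softQ_sub_softQ_le (hT0 : ∀ s a s', 0 ≤ T s a s') (hT1 : ∀ s a, ∑ s', T s a s' = 1)
    (hγ0 : 0 ≤ γ) {θ : E} {v w : S → ℝ} {c : ℝ} (h : ∀ s', |v s' - w s'| ≤ c) (s : S) (a : A) :
    |softQ T γ ℓ θ v s a - softQ T γ ℓ θ w s a| ≤ γ * c := by
  have hdiff : softQ T γ ℓ θ v s a - softQ T γ ℓ θ w s a = γ * ∑ s', T s a s' * (v s' - w s') := by
    simp only [softQ, mul_sub, sum_sub_distrib]
    ring
  rw [hdiff, abs_mul, abs_of_nonneg hγ0]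
  exact mul_le_mul_of_nonneg_left (abs_sum_mul_le_of_sum_eq_one (hT0 s a) (hT1 s a) h) hγ0

lemma norm_softQDeriv_sub_le (hT0 : ∀ s a s', 0 ≤ T s a s') (hT1 : ∀ s a, ∑ s', T s a s' = 1)
    (hγ0 : 0 ≤ γ) {D D' : S → E →L[ℝ] ℝ} {c : ℝ} (h : ∀ s', ‖D s' - D' s'‖ ≤ c) (s : S) (a : A) :
    ‖softQDeriv T γ ℓ D s a - softQDeriv T γ ℓ D' s a‖ ≤ γ * c := by
  have hdiff : softQDeriv T γ ℓ D s a - softQDeriv T γ ℓ D' s a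
      = γ • ∑ s', T s a s' • (D s' - D' s') := by
    simp only [softQDeriv, smul_sub, sum_sub_distrib]
    abel
  rw [hdiff, norm_smul, norm_of_nonneg hγ0]
  exact mul_le_mul_of_nonneg_left (norm_sum_smul_le_of_sum_eq_one (hT0 s a) (hT1 s a) h) hγ0

lemma norm_softQDeriv_le (hT0 : ∀ s a s', 0 ≤ T s a s') (hT1 : ∀ s a, ∑ s', T s a s' = 1)
    (hγ0 : 0 ≤ γ) {ρ : ℝ} (hℓ : ∀ s a, ‖ℓ s a‖ ≤ (1 - γ) * ρ) {D : S → E →L[ℝ] ℝ}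
    (hD : ∀ s', ‖D s'‖ ≤ ρ) (s : S) (a : A) : ‖softQDeriv T γ ℓ D s a‖ ≤ ρ := by
  have hsum := norm_sum_smul_le_of_sum_eq_one (hT0 s a) (hT1 s a) hD
  calc ‖softQDeriv T γ ℓ D s a‖ ≤ (1 - γ) * ρ + γ * ρ := by
        refine (norm_add_le _ _).trans (add_le_add (hℓ s a) ?_)
        rw [norm_smul, norm_of_nonneg hγ0]
        exact mul_le_mul_of_nonneg_left hsum hγ0
    _ = ρ := by ring

variable [Fintype A]

section
variable (T γ β ℓ)

noncomputable def softBellman (θ : E) (v : S → ℝ) (s : S) : ℝ :=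
  β * log (∑ a, exp (softQ T γ ℓ θ v s a / β))

noncomputable def softPolicy (θ : E) (v : S → ℝ) (s : S) : A → ℝ :=
  softmax fun a => softQ T γ ℓ θ v s a / β

noncomputable def softValueIter : ℕ → E → S → ℝ
  | 0 => fun _ => 0
  | k + 1 => fun θ => softBellman T γ β ℓ θ (softValueIter k θ)

noncomputable def softValueIterDeriv : ℕ → E → S → E →L[ℝ] ℝ
  | 0 => fun _ => 0
  | k + 1 => fun θ s => ∑ a, softPolicy T γ β ℓ θ (softValueIter T γ β ℓ k θ) s a •
      softQDeriv T γ ℓ (softValueIterDeriv k θ) s a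

end

lemma hasFDerivAt_softValueIter [Nonempty A] (hβ : β ≠ 0) (k : ℕ) (θ : E) (s : S) :
    HasFDerivAt (fun θ => softValueIter T γ β ℓ k θ s) (softValueIterDeriv T γ β ℓ k θ s) θ := by
  induction k generalizing s with
  | zero => exact hasFDerivAt_const 0 θ
  | succ k ih => exact hasFDerivAt_mul_log_sum_exp_div hβ fun a => HasFDerivAt.softQ ih s a

lemma norm_softValueIterDeriv_le [Nonempty A] (hT0 : ∀ s a s', 0 ≤ T s a s')
    (hT1 : ∀ s a, ∑ s', T s a s' = 1) (hγ0 : 0 ≤ γ) {ρ : ℝ} (hρ : 0 ≤ ρ)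
    (hℓ : ∀ s a, ‖ℓ s a‖ ≤ (1 - γ) * ρ) (k : ℕ) (θ : E) (s : S) :
    ‖softValueIterDeriv T γ β ℓ k θ s‖ ≤ ρ := by
  induction k generalizing s with
  | zero => simpa [softValueIterDeriv] using hρ
  | succ k ih =>
    exact norm_sum_smul_le_of_sum_eq_one (softmax_nonneg _) (sum_softmax _)
      (norm_softQDeriv_le hT0 hT1 hγ0 hℓ ih s)

lemma abs_softQ_softValueIter_sub_le [Nonempty A] (hβ : β ≠ 0) (hT0 : ∀ s a s', 0 ≤ T s a s')
    (hT1 : ∀ s a, ∑ s', T s a s' = 1) (hγ0 : 0 ≤ γ) {ρ : ℝ} (hρ : 0 ≤ ρ)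
    (hℓ : ∀ s a, ‖ℓ s a‖ ≤ (1 - γ) * ρ) (k : ℕ) (θ θ' : E) (s : S) (a : A) :
    |softQ T γ ℓ θ (softValueIter T γ β ℓ k θ) s a
      - softQ T γ ℓ θ' (softValueIter T γ β ℓ k θ') s a| ≤ ρ * ‖θ - θ'‖ :=
  convex_univ.norm_image_sub_le_of_norm_hasFDerivWithin_le
    (fun θ _ => (HasFDerivAt.softQ (hasFDerivAt_softValueIter hβ k θ) s a).hasFDerivWithinAt)
    (fun θ _ => norm_softQDeriv_le hT0 hT1 hγ0 hℓ
      (norm_softValueIterDeriv_le hT0 hT1 hγ0 hρ hℓ k θ) s a)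
    (Set.mem_univ θ') (Set.mem_univ θ)

lemma norm_softValueIterDeriv_sub_le [Nonempty A] (hβ : 0 < β) (hT0 : ∀ s a s', 0 ≤ T s a s')
    (hT1 : ∀ s a, ∑ s', T s a s' = 1) (hγ0 : 0 ≤ γ) (hγ1 : γ < 1) {ρ : ℝ} (hρ : 0 ≤ ρ)
    (hℓ : ∀ s a, ‖ℓ s a‖ ≤ (1 - γ) * ρ) (k : ℕ) (θ θ' : E) (s : S) :
    ‖softValueIterDeriv T γ β ℓ k θ s - softValueIterDeriv T γ β ℓ k θ' s‖
      ≤ ρ ^ 2 / (β * (1 - γ)) * ‖θ - θ'‖ := by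
  have h1γ : 0 < 1 - γ := sub_pos.2 hγ1
  induction k generalizing s with
  | zero =>
    simp only [softValueIterDeriv, sub_self, norm_zero]
    positivity
  | succ k ih =>
    refine (norm_sum_softmax_smul_sub_sum_softmax_smul_le (norm_softQDeriv_sub_le hT0 hT1 hγ0 ih s)
      (norm_softQDeriv_le hT0 hT1 hγ0 hℓ (norm_softValueIterDeriv_le hT0 hT1 hγ0 hρ hℓ k θ') s)
      (c := ρ * ‖θ - θ'‖ / β) fun a => ?_).trans_eq ?_
    · rw [← sub_div, abs_div, abs_of_pos hβ]
      exact div_le_div_of_nonneg_right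
        (abs_softQ_softValueIter_sub_le hβ.ne' hT0 hT1 hγ0 hρ hℓ k θ θ' s a) hβ.le
    · field_simp
      ring

lemma abs_softBellman_sub_le [Nonempty A] (hβ : 0 < β) (hT0 : ∀ s a s', 0 ≤ T s a s')
    (hT1 : ∀ s a, ∑ s', T s a s' = 1) (hγ0 : 0 ≤ γ) {θ : E} {v w : S → ℝ} {c : ℝ}
    (h : ∀ s', |v s' - w s'| ≤ c) (s : S) :
    |softBellman T γ β ℓ θ v s - softBellman T γ β ℓ θ w s| ≤ γ * c := by
  rw [softBellman, softBellman, ← mul_sub, abs_mul, abs_of_pos hβ, ← le_div_iff₀' hβ]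
  refine abs_log_sum_exp_sub_le fun a => ?_
  rw [← sub_div, abs_div, abs_of_pos hβ]
  exact div_le_div_of_nonneg_right (abs_softQ_sub_softQ_le hT0 hT1 hγ0 h s a) hβ.le

lemma abs_softValueIter_sub_le [Nonempty A] (hβ : 0 < β) (hT0 : ∀ s a s', 0 ≤ T s a s')
    (hT1 : ∀ s a, ∑ s', T s a s' = 1) (hγ0 : 0 ≤ γ) {θ : E} {v : S → ℝ}
    (hv : ∀ s, v s = softBellman T γ β ℓ θ v s) (k : ℕ) (s : S) :
    |softValueIter T γ β ℓ k θ s - v s| ≤ γ ^ k * ‖v‖ := by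
  induction k generalizing s with
  | zero => simpa [softValueIter] using norm_le_pi_norm v s
  | succ k ih =>
    rw [hv s, pow_succ', mul_assoc]
    exact abs_softBellman_sub_le hβ hT0 hT1 hγ0 ih s

lemma norm_softValueIterDeriv_succ_sub_le [Nonempty A] (hβ : 0 < β)
    (hT0 : ∀ s a s', 0 ≤ T s a s') (hT1 : ∀ s a, ∑ s', T s a s' = 1) (hγ0 : 0 ≤ γ)
    (hγ1 : γ ≤ 1) {ρ : ℝ} (hρ : 0 ≤ ρ) (hℓ : ∀ s a, ‖ℓ s a‖ ≤ (1 - γ) * ρ) {θ : E}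
    {v : S → ℝ} (hv : ∀ s, v s = softBellman T γ β ℓ θ v s) (k : ℕ) (s : S) :
    ‖softValueIterDeriv T γ β ℓ (k + 1) θ s - softValueIterDeriv T γ β ℓ k θ s‖
      ≤ (ρ + k * (2 * ρ * ‖v‖ / β)) * γ ^ k := by
  induction k generalizing s with
  | zero =>
    simpa [softValueIterDeriv] using norm_softValueIterDeriv_le hT0 hT1 hγ0 hρ hℓ 1 θ s
  | succ k ih =>
    have hstep : ∀ s', |softValueIter T γ β ℓ (k + 1) θ s' - softValueIter T γ β ℓ k θ s'|
        ≤ 2 * γ ^ k * ‖v‖ := fun s' => by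
      have h1 := abs_softValueIter_sub_le hβ hT0 hT1 hγ0 hv (k + 1) s'
      have h2 := abs_softValueIter_sub_le hβ hT0 hT1 hγ0 hv k s'
      have h3 : γ ^ (k + 1) ≤ γ ^ k := pow_le_pow_of_le_one hγ0 hγ1 k.le_succ
      have := abs_sub_le (softValueIter T γ β ℓ (k + 1) θ s') (v s') (softValueIter T γ β ℓ k θ s')
      rw [abs_sub_comm (v s')] at this
      nlinarith [norm_nonneg v]
    refine (norm_sum_softmax_smul_sub_sum_softmax_smul_le (norm_softQDeriv_sub_le hT0 hT1 hγ0 ih s)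
      (norm_softQDeriv_le hT0 hT1 hγ0 hℓ (norm_softValueIterDeriv_le hT0 hT1 hγ0 hρ hℓ k θ) s)
      (c := γ * (2 * γ ^ k * ‖v‖) / β) fun a => ?_).trans_eq ?_
    · rw [← sub_div, abs_div, abs_of_pos hβ]
      exact div_le_div_of_nonneg_right (abs_softQ_sub_softQ_le hT0 hT1 hγ0 hstep s a) hβ.le
    · push_cast
      field_simp
      ring

lemma exists_tendsto_softValueIterDeriv [Nonempty A] (hβ : 0 < β)
    (hT0 : ∀ s a s', 0 ≤ T s a s') (hT1 : ∀ s a, ∑ s', T s a s' = 1) (hγ0 : 0 ≤ γ)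
    (hγ1 : γ < 1) {ρ : ℝ} (hρ : 0 ≤ ρ) (hℓ : ∀ s a, ‖ℓ s a‖ ≤ (1 - γ) * ρ) {θ : E}
    {v : S → ℝ} (hv : ∀ s, v s = softBellman T γ β ℓ θ v s) (s : S) :
    ∃ D, Tendsto (fun k => softValueIterDeriv T γ β ℓ k θ s) atTop (𝓝 D) := by
  have hgeom : Summable fun k : ℕ => (ρ + k * (2 * ρ * ‖v‖ / β)) * γ ^ k := by
    have h1 := summable_geometric_of_lt_one hγ0 hγ1
    have h2 := summable_pow_mul_geometric_of_norm_lt_one 1 (by rwa [norm_of_nonneg hγ0])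
    simp only [pow_one] at h2
    exact ((h1.mul_left ρ).add (h2.mul_right (2 * ρ * ‖v‖ / β))).congr fun k => by ring
  refine cauchySeq_tendsto_of_complete (cauchySeq_of_summable_dist ?_)
  refine hgeom.of_nonneg_of_le (fun k => dist_nonneg) fun k => ?_
  rw [dist_comm, dist_eq_norm]
  exact norm_softValueIterDeriv_succ_sub_le hβ hT0 hT1 hγ0 hγ1.le hρ hℓ hv k s

theorem exists_hasFDerivAt_softValue_lipschitz [Nonempty A] (hβ : 0 < β)
    (hT0 : ∀ s a s', 0 ≤ T s a s') (hT1 : ∀ s a, ∑ s', T s a s' = 1) (hγ0 : 0 ≤ γ)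
    (hγ1 : γ < 1) {ρ : ℝ} (hρ : 0 ≤ ρ) (hℓ : ∀ s a, ‖ℓ s a‖ ≤ (1 - γ) * ρ) {V : E → S → ℝ}
    (hV : ∀ θ s, V θ s = softBellman T γ β ℓ θ (V θ) s) :
    ∃ D : E → S → E →L[ℝ] ℝ, (∀ θ s, HasFDerivAt (fun θ => V θ s) (D θ s) θ) ∧
      ∀ θ θ' s, ‖D θ s - D θ' s‖ ≤ ρ ^ 2 / (β * (1 - γ)) * ‖θ - θ'‖ := by
  choose D hD using fun θ => exists_tendsto_softValueIterDeriv hβ hT0 hT1 hγ0 hγ1 hρ hℓ (hV θ)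
  have hvalue : ∀ θ s, Tendsto (fun k => softValueIter T γ β ℓ k θ s) atTop (𝓝 (V θ s)) :=
    fun θ s => tendsto_iff_norm_sub_tendsto_zero.2 <| squeeze_zero (fun _ => norm_nonneg _)
      (fun k => abs_softValueIter_sub_le hβ hT0 hT1 hγ0 (hV θ) k s)
      (by simpa using (tendsto_pow_atTop_nhds_zero_of_lt_one hγ0 hγ1).mul_const ‖V θ‖)
  have hlip := norm_softValueIterDeriv_sub_le hβ hT0 hT1 hγ0 hγ1 hρ hℓ
  refine ⟨D, fun θ s => ?_, fun θ θ' s => ?_⟩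
  · exact hasFDerivAt_of_tendsto_of_lipschitz_fderiv (fs := fun k θ => softValueIter T γ β ℓ k θ s)
      (fun k θ => hasFDerivAt_softValueIter hβ.ne' k θ s) (fun k θ θ' => hlip k θ θ' s)
      (fun θ => hvalue θ s) (fun θ => hD θ s) θ
  · exact le_of_tendsto ((hD θ s).sub (hD θ' s)).norm
      (Eventually.of_forall fun k => hlip k θ θ' s)

end SoftValueIteration

/-- Smoothness of the dual objective (Theorem 3.4).  With `V θ` the fixed point of the
soft Bellman operator `T_θ`, component-wise reward bounds `|r_m(s,a)| ≤ R_m`, an initial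
distribution `μ0`, and an offset vector `b`, the dual objective
`L(θ) = Σ_s μ0(s) V(θ)(s) − ⟨b, θ⟩` is differentiable and its gradient is `α`-Lipschitz
in the Euclidean norm with `α = (1/(β(1−γ))) Σ_m (R_m/(1−γ))²`. -/
theorem stmt_6 {p n : ℕ} {A : Type*} [Fintype A] [Nonempty A]
    (T : Fin p → A → Fin p → ℝ)
    (hT0 : ∀ s a s', 0 ≤ T s a s') (hT1 : ∀ s a, ∑ s', T s a s' = 1)
    (γ : ℝ) (hγ0 : 0 ≤ γ) (hγ1 : γ < 1)
    (β : ℝ) (hβ : 0 < β)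
    (r : Fin p → A → Fin n → ℝ)
    (R : Fin n → ℝ) (hr : ∀ s a m, |r s a m| ≤ R m)
    (μ0 : Fin p → ℝ) (hμ0 : ∀ s, 0 ≤ μ0 s) (hμ1 : ∑ s, μ0 s = 1)
    (b : EuclideanSpace ℝ (Fin n))
    (V : EuclideanSpace ℝ (Fin n) → Fin p → ℝ)
    (hV : ∀ θ s, V θ s = β * Real.log (∑ a : A, Real.exp
      ((∑ i, θ i * r s a i + γ * ∑ s', T s a s' * V θ s') / β))) :
    Differentiable ℝ (fun θ : EuclideanSpace ℝ (Fin n) =>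
        ∑ s, μ0 s * V θ s - ∑ i, b i * θ i) ∧
      ∀ θ θ' : EuclideanSpace ℝ (Fin n),
        ‖gradient (fun θ'' : EuclideanSpace ℝ (Fin n) =>
            ∑ s, μ0 s * V θ'' s - ∑ i, b i * θ'' i) θ
          - gradient (fun θ'' : EuclideanSpace ℝ (Fin n) =>
            ∑ s, μ0 s * V θ'' s - ∑ i, b i * θ'' i) θ'‖
          ≤ (1 / (β * (1 - γ)) * ∑ m, (R m / (1 - γ)) ^ 2) * ‖θ - θ'‖ := by
  have h1γ : 0 < 1 - γ := sub_pos.2 hγ1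
  set ρ := ‖(WithLp.toLp 2 R : EuclideanSpace ℝ (Fin n))‖ / (1 - γ) with hρ
  let ℓ : Fin p → A → EuclideanSpace ℝ (Fin n) →L[ℝ] ℝ :=
    fun s a => innerSL ℝ (WithLp.toLp 2 (r s a))
  have hℓ : ∀ s a, ‖ℓ s a‖ ≤ (1 - γ) * ρ := fun s a => by
    rw [hρ, mul_div_cancel₀ _ h1γ.ne', innerSL_apply_norm]
    exact EuclideanSpace.norm_toLp_le_of_abs_le (hr s a)
  have hV' : ∀ θ s, V θ s = softBellman T γ β ℓ θ (V θ) s := fun θ s => by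
    simpa [softBellman, softQ, ℓ, PiLp.inner_apply] using hV θ s
  obtain ⟨D, hD, hDlip⟩ := exists_hasFDerivAt_softValue_lipschitz hβ hT0 hT1 hγ0 hγ1
    (div_nonneg (norm_nonneg _) h1γ.le) hℓ hV'
  have hL : ∀ θ, HasFDerivAt (fun θ : EuclideanSpace ℝ (Fin n) =>
      ∑ s, μ0 s * V θ s - ∑ i, b i * θ i) (∑ s, μ0 s • D θ s - innerSL ℝ b) θ := fun θ =>
    (HasFDerivAt.fun_sum fun s _ => (hD θ s).const_mul (μ0 s)).sub <| by
      simpa [PiLp.inner_apply, mul_comm] using (innerSL ℝ b).hasFDerivAt (x := θ)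
  refine ⟨fun θ => (hL θ).differentiableAt, fun θ θ' => ?_⟩
  rw [(hL θ).hasGradientAt.gradient, (hL θ').hasGradientAt.gradient, ← map_sub,
    LinearIsometryEquiv.norm_map, sub_sub_sub_cancel_right, ← sum_sub_distrib]
  simp_rw [← smul_sub]
  convert norm_sum_smul_le_of_sum_eq_one hμ0 hμ1 fun s => hDlip θ θ' s using 2
  rw [div_pow, EuclideanSpace.real_norm_sq_eq, sum_div]
  simp_rw [div_pow]
  ring
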